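/- arXiv:1307.6876 — 3 statements merged into one kernel-verified Lean document; each statement's English description precedes it below -/
import Mathlib

section
/- There exists a sequence (v_j)_{j≥1} of real numbers with 0 < v_j ≤ 1 for all j ≥ 1 and v_j = Σ_{m≥1} s(j,m) v_m for every j ≥ 1, if and only if Π_{j=1}^∞ p_j > 0. (This is the classical criterion characterizing transience of the stochastic adding machine Markov chain with transition probabilities s(n,m): the chain is null recurrent iff Π_{j=1}^∞ p_j = 0 and transient otherwise.) -/
/-!
Write `P_k = p_1 ⋯ p_k` and let `t(n)` be the position of the leading Cantor digit of `n ≥ 1`,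
so that `q_{t-1} ≤ n < q_t`. The chain moves up only by `n → n + 1`; its other moves
`n → n - (q_r - 1)`, `r < ζ_n`, clear the `r` lowest digits. Hence it leaves the block of `t(n)`
only upwards into `q_t`, or by jumping to `0`, and `h(n) = 1 / P_{t(n)}`, `h(0) = 0`, is harmonic
on `n ≥ 1`. If `P_k → L > 0`, then `L h` is the required `v`.

Conversely, compare a given `v` with `P_{t+1} h` on `{0, …, q_t}`: both vanish at `0`, and at `q_t`
the latter equals `1 ≥ v`. As the only upward step is `+1`, the difference of these harmonic
functions has no interior maximum, so `v ≤ P_{t+1} h` there; at `n = 1` this reads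
`p_1 v_1 ≤ P_{t+1}`. Thus `P_k ≥ p_1 v_1 > 0` for all `k`.
-/

open Filter Finset
open scoped ENNReal Topology ZeroAtInfty

noncomputable section

namespace AMFC

/-- `q d j = d 0 * d 1 * ... * d j`. -/
def q (d : ℕ → ℕ) (j : ℕ) : ℕ := ∏ i ∈ Finset.range (j + 1), d i

/-- For `j ≥ 1`, `digit d n j = ⌊n / q_{j-1}⌋ mod d_j` is the `j`-th digit of `n`
in the Cantor system of numeration. -/
def digit (d : ℕ → ℕ) (n j : ℕ) : ℕ := (n / q d (j - 1)) % d j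

/-- The counter `ζ_n = min { j ≥ 1 : a_j(n) ≠ d_j - 1 }`. -/
def zeta (d : ℕ → ℕ) (n : ℕ) : ℕ := sInf {j | 1 ≤ j ∧ digit d n j ≠ d j - 1}

open scoped Classical in
/-- The transition probabilities of the stochastic adding machine. -/
def s (d : ℕ → ℕ) (p : ℕ → ℝ) (n m : ℕ) : ℝ :=
  if m = n + 1 then ∏ j ∈ Finset.Icc 1 (zeta d n), p j
  else if m = n then 1 - p 1
  else if h : ∃ r, 1 ≤ r ∧ r + 1 ≤ zeta d n ∧
      n = m + ∑ j ∈ Finset.Icc 1 r, (d j - 1) * q d (j - 1)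
    then (1 - p (h.choose + 1)) * ∏ j ∈ Finset.Icc 1 h.choose, p j
  else 0

/-- `f j (z) = ((z - (1 - p j)) / p j) ^ (d j)`. -/
def f (d : ℕ → ℕ) (p : ℕ → ℝ) (j : ℕ) (z : ℂ) : ℂ :=
  ((z - (1 - (p j : ℂ))) / (p j : ℂ)) ^ d j

/-- `ftil j = f j ∘ ... ∘ f 1`, with `ftil 0 = id`. -/
def ftil (d : ℕ → ℕ) (p : ℕ → ℝ) : ℕ → ℂ → ℂ
  | 0 => id
  | j + 1 => f d p (j + 1) ∘ ftil d p j

/-- The fibered filled Julia set `E = {z : limsup_j |ftil j z| < ∞}`. -/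
def E (d : ℕ → ℕ) (p : ℕ → ℝ) : Set ℂ :=
  {z | Filter.limsup (fun j => (‖ftil d p j z‖₊ : ℝ≥0∞)) Filter.atTop < ⊤}

/-- `ι_λ(r) = (ftil (r-1) λ - (1 - p r)) / p r` for `r ≥ 1`. -/
def iota (d : ℕ → ℕ) (p : ℕ → ℝ) (lam : ℂ) (r : ℕ) : ℂ :=
  (ftil d p (r - 1) lam - (1 - (p r : ℂ))) / (p r : ℂ)

/-- `v_λ(n) = ∏_{r ≥ 1} ι_λ(r) ^ a_r(n)`, a finite product. -/
def vlam (d : ℕ → ℕ) (p : ℕ → ℝ) (lam : ℂ) (n : ℕ) : ℂ :=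
  ∏ᶠ r : ℕ, iota d p lam (r + 1) ^ digit d n (r + 1)

/-- The point spectrum of a continuous linear operator. -/
def pointSpectrum {M : Type*} [NormedAddCommGroup M] [NormedSpace ℂ M]
    (T : M →L[ℂ] M) : Set ℂ :=
  {lam | ∃ v, v ≠ 0 ∧ T v = lam • v}

/-- The residual spectrum: `T - λI` is injective but its range is not dense. -/
def residualSpectrum {M : Type*} [NormedAddCommGroup M] [NormedSpace ℂ M]
    (T : M →L[ℂ] M) : Set ℂ :=
  {lam | Function.Injective ⇑(T - lam • (1 : M →L[ℂ] M)) ∧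
    ¬ DenseRange ⇑(T - lam • (1 : M →L[ℂ] M))}

/-- The continuous spectrum: `T - λI` is injective with dense range, but not surjective. -/
def continuousSpectrum {M : Type*} [NormedAddCommGroup M] [NormedSpace ℂ M]
    (T : M →L[ℂ] M) : Set ℂ :=
  {lam | Function.Injective ⇑(T - lam • (1 : M →L[ℂ] M)) ∧
    DenseRange ⇑(T - lam • (1 : M →L[ℂ] M)) ∧
    Set.range ⇑(T - lam • (1 : M →L[ℂ] M)) ≠ Set.univ}

section Cantor

variable {d : ℕ → ℕ}

lemma q_zero (hd0 : d 0 = 1) : q d 0 = 1 := by simp [q, hd0]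

lemma q_succ (j : ℕ) : q d (j + 1) = q d j * d (j + 1) := prod_range_succ d (j + 1)

lemma q_pos (hd0 : d 0 = 1) (hd : ∀ j, 1 ≤ j → 2 ≤ d j) (j : ℕ) : 0 < q d j :=
  prod_pos fun i _ => by rcases i with _ | i <;> grind

lemma q_strictMono (hd0 : d 0 = 1) (hd : ∀ j, 1 ≤ j → 2 ≤ d j) : StrictMono (q d) :=
  strictMono_nat_of_lt_succ fun j => by
    rw [q_succ]
    exact lt_mul_of_one_lt_right (q_pos hd0 hd j) (hd (j + 1) (by omega))

lemma q_dvd_q {a b : ℕ} (h : a ≤ b) : q d a ∣ q d b :=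
  prod_dvd_prod_of_subset _ _ d (range_subset_range.mpr (by omega))

lemma exists_lt_q (hd0 : d 0 = 1) (hd : ∀ j, 1 ≤ j → 2 ≤ d j) (n : ℕ) : ∃ t, n < q d t :=
  ⟨n + 1, ((q_strictMono hd0 hd).id_le n).trans_lt (q_strictMono hd0 hd n.lt_succ_self)⟩

lemma two_le_q (hd0 : d 0 = 1) (hd : ∀ j, 1 ≤ j → 2 ≤ d j) {r : ℕ} (hr : 1 ≤ r) : 2 ≤ q d r := by
  have := (q_strictMono hd0 hd).monotone hr
  have := q_succ (d := d) 0
  grind [q_zero]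

lemma sum_Icc_pred_mul_q (hd0 : d 0 = 1) (hd : ∀ j, 1 ≤ j → 2 ≤ d j) (r : ℕ) :
    ∑ j ∈ Icc 1 r, (d j - 1) * q d (j - 1) = q d r - 1 := by
  induction r with
  | zero => simp [q_zero hd0]
  | succ r ih =>
    rw [sum_Icc_succ_top (by omega), ih, Nat.add_sub_cancel, q_succ, Nat.sub_one_mul, mul_comm]
    have := q_pos hd0 hd r
    have : q d r ≤ q d r * d (r + 1) := Nat.le_mul_of_pos_right _ (by grind)
    omega

lemma mod_q_eq_pred_iff (hd0 : d 0 = 1) (hd : ∀ j, 1 ≤ j → 2 ≤ d j) (n t : ℕ) :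
    n % q d t = q d t - 1 ↔ ∀ j, 1 ≤ j → j ≤ t → digit d n j = d j - 1 := by
  induction t with
  | zero =>
    simp only [q_zero hd0, Nat.mod_one, Nat.sub_self, true_iff]
    intro j h1 h2
    omega
  | succ t ih =>
    have hQ := q_pos hd0 hd t
    have hsplit : n % q d (t + 1) = n % q d t + q d t * digit d n (t + 1) := by
      rw [q_succ, Nat.mod_mul]; rfl
    have htop : q d (t + 1) - 1 = (q d t - 1) + q d t * (d (t + 1) - 1) := by
      rw [q_succ, Nat.mul_sub_one]
      have : q d t ≤ q d t * d (t + 1) := Nat.le_mul_of_pos_right _ (by grind)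
      omega
    have hstep : n % q d (t + 1) = q d (t + 1) - 1 ↔
        n % q d t = q d t - 1 ∧ digit d n (t + 1) = d (t + 1) - 1 := by
      rw [hsplit, htop]
      refine ⟨fun h => ?_, fun ⟨h1, h2⟩ => by rw [h1, h2]⟩
      have hdig := congrArg (· / q d t) h
      simp only [Nat.add_mul_div_left _ _ hQ, Nat.div_eq_of_lt (Nat.mod_lt n hQ),
        Nat.div_eq_of_lt (Nat.sub_lt hQ one_pos), zero_add] at hdig
      rw [hdig] at h
      exact ⟨by omega, hdig⟩
    rw [hstep, ih]
    refine ⟨fun ⟨h1, h2⟩ j hj1 hj2 => ?_,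
      fun h => ⟨fun j hj1 hj2 => h j hj1 (by omega), h _ (by omega) le_rfl⟩⟩
    rcases Nat.le_succ_iff.mp hj2 with hj | rfl
    exacts [h1 j hj1 hj, h2]

lemma lt_zeta_iff (hd0 : d 0 = 1) (hd : ∀ j, 1 ≤ j → 2 ≤ d j) (n t : ℕ) :
    t < zeta d n ↔ n % q d t = q d t - 1 := by
  rw [mod_q_eq_pred_iff hd0 hd]
  constructor
  · intro h j hj1 hj2
    by_contra hne
    exact Nat.notMem_of_lt_sInf (h.trans_le' hj2) ⟨hj1, hne⟩
  · intro h
    obtain ⟨m, hm⟩ := exists_lt_q hd0 hd n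
    have hne : {j | 1 ≤ j ∧ digit d n j ≠ d j - 1}.Nonempty := by
      refine ⟨m + 1, by omega, ?_⟩
      have := hd (m + 1) (by omega)
      simp only [digit, Nat.add_sub_cancel, Nat.div_eq_of_lt hm, Nat.zero_mod]
      omega
    by_contra hle
    obtain ⟨h1, h2⟩ := Nat.sInf_mem hne
    exact h2 (h _ h1 (by unfold zeta at hle; omega))

lemma one_le_zeta (hd0 : d 0 = 1) (hd : ∀ j, 1 ≤ j → 2 ≤ d j) (n : ℕ) : 1 ≤ zeta d n :=
  (lt_zeta_iff hd0 hd n 0).mpr (by rw [q_zero hd0, Nat.mod_one])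

lemma pred_q_le_of_lt_zeta (hd0 : d 0 = 1) (hd : ∀ j, 1 ≤ j → 2 ≤ d j) {n r : ℕ}
    (hr : r < zeta d n) : q d r - 1 ≤ n :=
  (lt_zeta_iff hd0 hd n r).mp hr ▸ Nat.mod_le n _

lemma zeta_eq_of_succ_eq_q (hd0 : d 0 = 1) (hd : ∀ j, 1 ≤ j → 2 ≤ d j) {n t : ℕ}
    (h : n + 1 = q d t) : zeta d n = t + 1 := by
  have hlt := q_strictMono hd0 hd (by omega : t < t + 1)
  have h1 : t < zeta d n := (lt_zeta_iff hd0 hd n t).mpr (by rw [Nat.mod_eq_of_lt] <;> omega)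
  have h2 : ¬ t + 1 < zeta d n := by
    rw [lt_zeta_iff hd0 hd, Nat.mod_eq_of_lt (by omega)]
    omega
  omega

lemma zeta_le_of_succ_lt_q (hd0 : d 0 = 1) (hd : ∀ j, 1 ≤ j → 2 ≤ d j) {n t : ℕ}
    (h : n + 1 < q d t) : zeta d n ≤ t := by
  by_contra! ht
  have := (lt_zeta_iff hd0 hd n t).mp ht
  rw [Nat.mod_eq_of_lt (by omega)] at this
  omega

/-- For `n ≥ 1`, the position `t` of the leading Cantor digit of `n`: `q_{t-1} ≤ n < q_t`. -/
def numDigits (d : ℕ → ℕ) (n : ℕ) : ℕ := sInf {t | n < q d t}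

lemma lt_q_numDigits (hd0 : d 0 = 1) (hd : ∀ j, 1 ≤ j → 2 ≤ d j) (n : ℕ) :
    n < q d (numDigits d n) :=
  Nat.sInf_mem (exists_lt_q hd0 hd n)

lemma q_pred_numDigits_le (hd0 : d 0 = 1) {n : ℕ} (hn : 1 ≤ n) : q d (numDigits d n - 1) ≤ n := by
  rcases Nat.eq_zero_or_pos (numDigits d n) with h | h
  · rw [h, q_zero hd0]; exact hn
  · exact not_lt.mp (Nat.notMem_of_lt_sInf (s := {t | n < q d t}) (Nat.sub_one_lt_of_lt h))

lemma numDigits_eq (hd0 : d 0 = 1) (hd : ∀ j, 1 ≤ j → 2 ≤ d j) {n t : ℕ}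
    (h1 : q d (t - 1) ≤ n) (h2 : n < q d t) : numDigits d n = t := by
  refine le_antisymm (Nat.sInf_le h2) (by_contra fun hlt => ?_)
  have := (q_strictMono hd0 hd).monotone (show numDigits d n ≤ t - 1 by omega)
  have := lt_q_numDigits hd0 hd n
  omega

lemma numDigits_q (hd0 : d 0 = 1) (hd : ∀ j, 1 ≤ j → 2 ≤ d j) (t : ℕ) :
    numDigits d (q d t) = t + 1 :=
  numDigits_eq hd0 hd le_rfl (q_strictMono hd0 hd (by omega : t < t + 1))

lemma numDigits_one (hd0 : d 0 = 1) (hd : ∀ j, 1 ≤ j → 2 ≤ d j) : numDigits d 1 = 1 :=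
  numDigits_eq hd0 hd (by rw [Nat.sub_self, q_zero hd0]) (two_le_q hd0 hd le_rfl)

/-- Subtracting `q_r - 1` from `n` clears the digits `a_1(n) = d_1 - 1, …, a_r(n) = d_r - 1`
and leaves the leading digit in place. -/
lemma numDigits_sub_pred_q (hd0 : d 0 = 1) (hd : ∀ j, 1 ≤ j → 2 ≤ d j) {n r : ℕ}
    (hr : r < zeta d n) (hqr : q d r ≤ n) :
    numDigits d (n - (q d r - 1)) = numDigits d n := by
  set t := numDigits d n
  have hn : n < q d t := lt_q_numDigits hd0 hd n
  have ht : q d (t - 1) ≤ n := q_pred_numDigits_le hd0 (by have := q_pos hd0 hd r; omega)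
  have hrt : r ≤ t - 1 := by
    have := (q_strictMono hd0 hd).lt_iff_lt.mp (hqr.trans_lt hn)
    omega
  have hmod := (lt_zeta_iff hd0 hd n r).mp hr
  have hdiv := Nat.div_add_mod n (q d r)
  obtain ⟨c, hc⟩ := q_dvd_q (d := d) hrt
  have hcle : c ≤ n / q d r :=
    (Nat.le_div_iff_mul_le (q_pos hd0 hd r)).mpr (by rw [mul_comm, ← hc]; exact ht)
  have : q d (t - 1) ≤ q d r * (n / q d r) := hc ▸ Nat.mul_le_mul_left _ hcle
  exact numDigits_eq hd0 hd (by omega) (by omega)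

end Cantor

section Row

variable {d : ℕ → ℕ} {p : ℕ → ℝ}

def prodUpTo (p : ℕ → ℝ) (k : ℕ) : ℝ := ∏ j ∈ Icc 1 k, p j

lemma prodUpTo_succ (k : ℕ) : prodUpTo p (k + 1) = prodUpTo p k * p (k + 1) :=
  prod_Icc_succ_top (by omega) p

lemma prodUpTo_one : prodUpTo p 1 = p 1 := by simp [prodUpTo]

lemma sum_Icc_one_sub_mul_prodUpTo (z : ℕ) :
    ∑ r ∈ Icc 1 z, (1 - p (r + 1)) * prodUpTo p r = p 1 - prodUpTo p (z + 1) := by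
  induction z with
  | zero => simp [prodUpTo_one]
  | succ z ih =>
    rw [sum_Icc_succ_top (by omega), ih, prodUpTo_succ (z + 1)]
    ring

lemma s_eq (hd0 : d 0 = 1) (hd : ∀ j, 1 ≤ j → 2 ≤ d j) (n m : ℕ) :
    s d p n m = (if m = n + 1 then prodUpTo p (zeta d n) else 0) + (if m = n then 1 - p 1 else 0)
      + ∑ r ∈ Icc 1 (zeta d n - 1),
          if m = n - (q d r - 1) then (1 - p (r + 1)) * prodUpTo p r else 0 := by
  have hζ := one_le_zeta hd0 hd n
  have hback : ∀ r ∈ Icc 1 (zeta d n - 1), 2 ≤ q d r ∧ q d r - 1 ≤ n := fun r hr =>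
    ⟨two_le_q hd0 hd (mem_Icc.mp hr).1,
      pred_q_le_of_lt_zeta (n := n) (r := r) hd0 hd (by have := (mem_Icc.mp hr).2; omega)⟩
  have hnone : (∀ r ∈ Icc 1 (zeta d n - 1), m ≠ n - (q d r - 1)) →
      ∑ r ∈ Icc 1 (zeta d n - 1),
        (if m = n - (q d r - 1) then (1 - p (r + 1)) * prodUpTo p r else 0) = 0 :=
    fun h => sum_eq_zero fun r hr => if_neg (h r hr)
  unfold s
  by_cases h1 : m = n + 1
  · rw [if_pos h1, if_pos h1, if_neg (by omega),
      hnone fun r hr => by obtain ⟨_, _⟩ := hback r hr; omega]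
    simp [prodUpTo]
  by_cases h2 : m = n
  · rw [if_neg h1, if_neg h1, if_pos h2, if_pos h2,
      hnone fun r hr => by obtain ⟨_, _⟩ := hback r hr; omega]
    simp
  rw [if_neg h1, if_neg h1, if_neg h2, if_neg h2, zero_add, zero_add]
  by_cases h3 : ∃ r, 1 ≤ r ∧ r + 1 ≤ zeta d n ∧ n = m + ∑ j ∈ Icc 1 r, (d j - 1) * q d (j - 1)
  · rw [dif_pos h3]
    obtain ⟨hr1, hr2, hr3⟩ := h3.choose_spec
    rw [sum_Icc_pred_mul_q hd0 hd] at hr3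
    rw [sum_eq_single_of_mem h3.choose (mem_Icc.mpr ⟨hr1, by omega⟩), if_pos (by omega)]
    · rfl
    · intro r hr hne
      refine if_neg fun hm => hne ((q_strictMono hd0 hd).injective ?_)
      obtain ⟨_, _⟩ := hback r hr
      have := q_pos hd0 hd h3.choose
      omega
  · rw [dif_neg h3, hnone]
    intro r hr hm
    obtain ⟨_, _⟩ := hback r hr
    refine h3 ⟨r, (mem_Icc.mp hr).1, by have := (mem_Icc.mp hr).2; omega, ?_⟩
    rw [sum_Icc_pred_mul_q hd0 hd]
    omega

/-- `(S w)(n) = Σ_m s(n,m) w(m)`, written out along the row structure of `S`. -/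
def sApply (d : ℕ → ℕ) (p : ℕ → ℝ) (w : ℕ → ℝ) (n : ℕ) : ℝ :=
  (1 - p 1) * w n + prodUpTo p (zeta d n) * w (n + 1)
    + ∑ r ∈ Icc 1 (zeta d n - 1), (1 - p (r + 1)) * prodUpTo p r * w (n - (q d r - 1))

lemma sApply_sub (v w : ℕ → ℝ) (n : ℕ) :
    sApply d p (v - w) n = sApply d p v n - sApply d p w n := by
  simp only [sApply, Pi.sub_apply, mul_sub, sum_sub_distrib]
  ring

lemma sApply_smul (c : ℝ) (w : ℕ → ℝ) (n : ℕ) : sApply d p (c • w) n = c * sApply d p w n := by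
  simp only [sApply, Pi.smul_apply, smul_eq_mul, mul_add, mul_sum, mul_left_comm c]

lemma tsum_s_mul_succ (hd0 : d 0 = 1) (hd : ∀ j, 1 ≤ j → 2 ≤ d j) (v : ℕ → ℝ) (n : ℕ) :
    ∑' m, s d p n (m + 1) * v (m + 1) = sApply d p (Function.update v 0 0) n := by
  set w := Function.update v 0 0
  have hw : ∀ m, v (m + 1) = w (m + 1) := fun m => (Function.update_of_ne m.succ_ne_zero _ _).symm
  have hshift := sum_range_succ' (fun m => s d p n m * w m) (n + 1)
  rw [show w 0 = 0 from Function.update_self .., mul_zero, add_zero] at hshift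
  have hback : ∀ r ∈ Icc 1 (zeta d n - 1), n - (q d r - 1) < n + 2 := fun _ _ => by omega
  simp only [hw]
  rw [tsum_eq_sum (s := range (n + 1)), ← hshift]
  · simp only [s_eq hd0 hd, add_mul, ite_mul, zero_mul, sum_mul, sum_add_distrib]
    rw [sum_comm]
    simp only [sum_ite_eq', mem_range]
    rw [if_pos (by omega), if_pos (by omega), sum_congr rfl fun r hr => if_pos (hback r hr)]
    unfold sApply
    ring
  · intro m hm
    rw [mem_range] at hm
    rw [s_eq hd0 hd, if_neg (by omega), if_neg (by omega),
      sum_eq_zero fun r hr => if_neg (by have := hback r hr; omega)]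
    simp

end Row

section Harmonic

variable {d : ℕ → ℕ} {p : ℕ → ℝ}

lemma prodUpTo_pos (hp : ∀ j, 1 ≤ j → 0 < p j) (k : ℕ) : 0 < prodUpTo p k :=
  prod_pos fun j hj => hp j (mem_Icc.mp hj).1

lemma prodUpTo_antitone (hp : ∀ j, 1 ≤ j → p j ∈ Set.Ioc (0 : ℝ) 1) : Antitone (prodUpTo p) :=
  antitone_nat_of_succ_le fun k => by
    rw [prodUpTo_succ]
    exact mul_le_of_le_one_right (prodUpTo_pos (fun j hj => (hp j hj).1) k).le
      (hp (k + 1) (by omega)).2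

def invLevelProd (d : ℕ → ℕ) (p : ℕ → ℝ) (n : ℕ) : ℝ :=
  if n = 0 then 0 else (prodUpTo p (numDigits d n))⁻¹

lemma sApply_invLevelProd (hd0 : d 0 = 1) (hd : ∀ j, 1 ≤ j → 2 ≤ d j)
    (hp : ∀ j, 1 ≤ j → 0 < p j) {n : ℕ} (hn : 1 ≤ n) :
    sApply d p (invLevelProd d p) n = invLevelProd d p n := by
  obtain ⟨t, ht⟩ : ∃ t, numDigits d n = t := ⟨_, rfl⟩
  have htop : n < q d t := ht ▸ lt_q_numDigits hd0 hd n
  have hbot : q d (t - 1) ≤ n := ht ▸ q_pred_numDigits_le hd0 hn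
  have hζ := one_le_zeta hd0 hd n
  have hval : ∀ m, 1 ≤ m → numDigits d m = t → invLevelProd d p m = (prodUpTo p t)⁻¹ :=
    fun m hm ht => by rw [invLevelProd, if_neg (by omega), ht]
  have hback : ∀ r, 1 ≤ r → r ≤ t - 1 → r < zeta d n →
      invLevelProd d p (n - (q d r - 1)) = (prodUpTo p t)⁻¹ := fun r hr1 hr2 hrζ => by
    have hqr : q d r ≤ n := ((q_strictMono hd0 hd).monotone hr2).trans hbot
    exact hval _ (by have := two_le_q hd0 hd hr1; omega)
      ((numDigits_sub_pred_q hd0 hd hrζ hqr).trans ht)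
  rw [hval n hn ht]
  unfold sApply
  rcases (show n + 1 < q d t ∨ n + 1 = q d t by omega) with hlt | heq
  · -- no carry into the leading digit: every neighbour of `n` stays in its block
    have hζt := zeta_le_of_succ_lt_q hd0 hd hlt
    rw [hval n hn ht, hval (n + 1) (by omega) (numDigits_eq hd0 hd (by omega) hlt),
      sum_congr rfl fun r hr => by
        obtain ⟨hr1, hr2⟩ := mem_Icc.mp hr
        rw [hback r hr1 (by omega) (by omega)],
      ← sum_mul, sum_Icc_one_sub_mul_prodUpTo, Nat.sub_add_cancel hζ]
    ring
  · -- `n = q_t - 1` and the step `n → n + 1` enters the next block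
    have hζt := zeta_eq_of_succ_eq_q hd0 hd heq
    have ht1 : 1 ≤ t := by
      by_contra h
      rw [show t = 0 by omega, q_zero hd0] at heq
      omega
    obtain ⟨u, rfl⟩ : ∃ u, t = u + 1 := ⟨t - 1, by omega⟩
    have hPu1 := (prodUpTo_pos hp (u + 1)).ne'
    have hPu2 := (prodUpTo_pos hp (u + 2)).ne'
    have hnext : invLevelProd d p (n + 1) = (prodUpTo p (u + 2))⁻¹ := by
      rw [invLevelProd, if_neg (by omega), heq, numDigits_q hd0 hd]
    rw [hval n hn ht, hnext, hζt, Nat.add_sub_cancel, sum_Icc_succ_top (by omega),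
      show n - (q d (u + 1) - 1) = 0 by omega,
      sum_congr rfl fun r hr => by
        obtain ⟨hr1, hr2⟩ := mem_Icc.mp hr
        rw [hback r hr1 (by omega) (by omega)],
      ← sum_mul, sum_Icc_one_sub_mul_prodUpTo, invLevelProd, if_pos rfl]
    field_simp
    ring

lemma smul_invLevelProd_mem_Ioc (hp : ∀ j, 1 ≤ j → 0 < p j) {L : ℝ} (hL : 0 < L)
    (hLle : ∀ k, L ≤ prodUpTo p k) {n : ℕ} (hn : 1 ≤ n) :
    (L • invLevelProd d p) n ∈ Set.Ioc 0 1 := by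
  have hP := prodUpTo_pos hp (numDigits d n)
  simp only [Pi.smul_apply, smul_eq_mul, invLevelProd, if_neg (by omega : n ≠ 0), ← div_eq_mul_inv]
  exact ⟨div_pos hL hP, (div_le_one hP).mpr (hLle _)⟩

end Harmonic

lemma le_max_of_forall_le_succ {X : ℕ → ℝ}
    (hstep : ∀ j, 0 < j → (∀ i ≤ j, X i ≤ X j) → X j ≤ X (j + 1)) :
    ∀ N, ∀ i ≤ N, X i ≤ max (X 0) (X N) := by
  intro N
  induction N with
  | zero => intro i hi; simp [Nat.le_zero.mp hi]
  | succ N ih =>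
    intro i hi
    rcases Nat.lt_or_ge i (N + 1) with hi' | hi'
    swap
    · rw [show i = N + 1 by omega]; exact le_max_right _ _
    by_cases hN : X N ≤ X 0
    · exact (ih i (by omega)).trans ((max_eq_left hN).trans_le (le_max_left _ _))
    · have hmax : ∀ i ≤ N, X i ≤ X N := fun i hi => (ih i hi).trans (max_le (by linarith) le_rfl)
      have hN0 : 0 < N := Nat.pos_of_ne_zero fun h => hN (h ▸ le_rfl)
      exact ((hmax i (by omega)).trans (hstep N hN0 hmax)).trans (le_max_right _ _)

section Transience

variable {d : ℕ → ℕ} {p : ℕ → ℝ}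

/-- One-sided maximum principle: the only up-step of the chain is `n → n + 1`, so a harmonic
function that is maximal at `n` among `0, …, n` cannot decrease at `n + 1`. -/
lemma le_succ_of_sApply_eq (hd0 : d 0 = 1) (hd : ∀ j, 1 ≤ j → 2 ≤ d j)
    (hp : ∀ j, 1 ≤ j → p j ∈ Set.Ioc (0 : ℝ) 1) {w : ℕ → ℝ} {n : ℕ}
    (hw : sApply d p w n = w n) (hmax : ∀ i ≤ n, w i ≤ w n) : w n ≤ w (n + 1) := by
  have hback : ∑ r ∈ Icc 1 (zeta d n - 1), (1 - p (r + 1)) * prodUpTo p r * w (n - (q d r - 1))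
      ≤ (p 1 - prodUpTo p (zeta d n)) * w n := by
    rw [← Nat.sub_add_cancel (one_le_zeta hd0 hd n), Nat.add_sub_cancel,
      ← sum_Icc_one_sub_mul_prodUpTo, sum_mul]
    refine sum_le_sum fun r hr => mul_le_mul_of_nonneg_left (hmax _ (Nat.sub_le _ _)) ?_
    exact mul_nonneg (sub_nonneg.mpr (hp (r + 1) (by omega)).2)
      (prodUpTo_pos (fun j hj => (hp j hj).1) r).le
  have hP := prodUpTo_pos (fun j hj => (hp j hj).1) (zeta d n)
  unfold sApply at hw
  nlinarith

lemma mul_le_prodUpTo_of_sApply_eq (hd0 : d 0 = 1) (hd : ∀ j, 1 ≤ j → 2 ≤ d j)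
    (hp : ∀ j, 1 ≤ j → p j ∈ Set.Ioc (0 : ℝ) 1) {v : ℕ → ℝ} (hv0 : v 0 = 0)
    (hv1 : ∀ n, 1 ≤ n → v n ≤ 1) (hv : ∀ n, 1 ≤ n → sApply d p v n = v n) (t : ℕ) :
    p 1 * v 1 ≤ prodUpTo p (t + 1) := by
  have hpos : ∀ j, 1 ≤ j → 0 < p j := fun j hj => (hp j hj).1
  -- compare `v` on `[0, q_t]` with the harmonic function equal to `0` at `0` and to `1` at `q_t`
  set X := v - prodUpTo p (t + 1) • invLevelProd d p
  have hX : ∀ n, 1 ≤ n → sApply d p X n = X n := fun n hn => by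
    rw [sApply_sub, sApply_smul, sApply_invLevelProd hd0 hd hpos hn, hv n hn]; rfl
  have hX0 : X 0 = 0 := by simp [X, hv0, invLevelProd]
  have hXq : X (q d t) ≤ 0 := by
    have := hv1 _ (q_pos hd0 hd t)
    simp only [X, Pi.sub_apply, Pi.smul_apply, smul_eq_mul, invLevelProd,
      if_neg (q_pos hd0 hd t).ne', numDigits_q hd0 hd,
      mul_inv_cancel₀ (prodUpTo_pos hpos (t + 1)).ne']
    linarith
  have hX1 : X 1 ≤ 0 := (le_max_of_forall_le_succ (fun j hj hmax =>
    le_succ_of_sApply_eq hd0 hd hp (hX j hj) hmax) (q d t) 1 (q_pos hd0 hd t)).trans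
      (max_le hX0.le hXq)
  simp only [X, Pi.sub_apply, Pi.smul_apply, smul_eq_mul, invLevelProd, one_ne_zero, if_false,
    numDigits_one hd0 hd, prodUpTo_one] at hX1
  have hp1 := hpos 1 le_rfl
  rw [sub_nonpos, ← div_eq_mul_inv, le_div_iff₀ hp1] at hX1
  linarith

end Transience

/-- the classical transience criterion: a sequence `v` with
`0 < v_j ≤ 1` and `v_j = Σ_{m≥1} s(j,m) v_m` for all `j ≥ 1` exists iff `Π_{j≥1} p_j > 0`. -/
theorem stmt0 (d : ℕ → ℕ) (p : ℕ → ℝ)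
    (hd0 : d 0 = 1) (hd : ∀ j, 1 ≤ j → 2 ≤ d j)
    (hp : ∀ j, 1 ≤ j → p j ∈ Set.Ioc (0 : ℝ) 1) :
    (∃ v : ℕ → ℝ, (∀ j, 1 ≤ j → 0 < v j ∧ v j ≤ 1) ∧
        (∀ j, 1 ≤ j → v j = ∑' m : ℕ, s d p j (m + 1) * v (m + 1))) ↔
      ∃ L : ℝ, 0 < L ∧
        Filter.Tendsto (fun n => ∏ j ∈ Finset.Icc 1 n, p j) Filter.atTop (nhds L) := by
  have hpos : ∀ j, 1 ≤ j → 0 < p j := fun j hj => (hp j hj).1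
  have hanti := prodUpTo_antitone hp
  constructor
  · rintro ⟨v, hv, hharm⟩
    have hw : ∀ n, 1 ≤ n → Function.update v 0 0 n = v n := fun n hn =>
      Function.update_of_ne (by omega) _ _
    have hlow : ∀ k, p 1 * v 1 ≤ prodUpTo p k := fun k => by
      rw [← hw 1 le_rfl]
      refine (mul_le_prodUpTo_of_sApply_eq hd0 hd hp (Function.update_self ..)
        (fun n hn => (hw n hn).trans_le (hv n hn).2) (fun n hn => ?_) k).trans (hanti k.le_succ)
      rw [← tsum_s_mul_succ hd0 hd, hw n hn, hharm n hn]
    exact ⟨_, (mul_pos (hpos 1 le_rfl) (hv 1 le_rfl).1).trans_le (le_ciInf hlow),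
      tendsto_atTop_ciInf hanti ⟨0, Set.forall_mem_range.mpr fun k => (prodUpTo_pos hpos k).le⟩⟩
  · rintro ⟨L, hL, hlim⟩
    have hLle : ∀ k, L ≤ prodUpTo p k := hanti.le_of_tendsto hlim
    refine ⟨L • invLevelProd d p, fun j hj => smul_invLevelProd_mem_Ioc hpos hL hLle hj,
      fun j hj => ?_⟩
    rw [tsum_s_mul_succ hd0 hd, Function.update_eq_self_iff.mpr (by simp [invLevelProd]),
      sApply_smul, sApply_invLevelProd hd0 hd hpos hj]
    rfl

end AMFC
end
end

section
/- Every z ∈ E satisfies |z − (1 − p_1)| ≤ p_1 (i.e. E is contained in the closed disk of center 1 − p_1 and radius p_1), and moreover for every z ∈ E and every j ≥ 1 one has |f̃_j(z) − (1 − p_{j+1})| ≤ p_{j+1}. -/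
open Filter Finset
open scoped ENNReal Topology ZeroAtInfty

noncomputable section

namespace AMFC

/-! If some `ftil j z` leaves the disk of center `1 - p (j + 1)` and radius `p (j + 1)`, then the
rescaled point `u = iota z (j + 1)` has `‖u‖ > 1`, and since `d (j + 1) ≥ 2` and `p (j + 2) ≤ 1`,
the next rescaled point has norm at least `‖u‖ ^ 2`. Iterating, the norms grow at least like
`‖u‖ ^ 2 ^ k`, so `‖ftil j z‖ → ∞` and `z ∉ E`. -/

theorem sq_norm_le_norm_pow_sub_div {u : ℂ} {n : ℕ} {q : ℝ} (hu : 1 ≤ ‖u‖) (hn : 2 ≤ n)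
    (hq : q ∈ Set.Ioc (0 : ℝ) 1) :
    ‖u‖ ^ 2 ≤ ‖(u ^ n - (1 - (q : ℂ))) / q‖ := by
  obtain ⟨hq0, hq1⟩ := hq
  have hnorm_c : ‖(1 - (q : ℂ))‖ = 1 - q := by
    rw [← Complex.ofReal_one, ← Complex.ofReal_sub, Complex.norm_real, Real.norm_of_nonneg]
    linarith
  have hpow : ‖u‖ ^ 2 ≤ ‖u‖ ^ n := pow_le_pow_right₀ hu hn
  have htri : ‖u‖ ^ n - (1 - q) ≤ ‖u ^ n - (1 - (q : ℂ))‖ := by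
    simpa [hnorm_c, norm_pow] using norm_sub_norm_le (u ^ n) (1 - (q : ℂ))
  rw [norm_div, Complex.norm_real, Real.norm_of_nonneg hq0.le, le_div_iff₀ hq0]
  -- `q ‖u‖² ≤ ‖u‖² - (1 - q)` is `(1 - q) (‖u‖² - 1) ≥ 0`
  nlinarith [mul_nonneg (sub_nonneg.2 hq1) (sub_nonneg.2 (one_le_pow₀ hu (n := 2)))]

theorem limsup_enorm_eq_top_of_tendsto {F : Type*} [NormedAddCommGroup F] {x : ℕ → F}
    (h : Tendsto (fun j ↦ ‖x j‖) atTop atTop) :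
    limsup (fun j ↦ (‖x j‖₊ : ℝ≥0∞)) atTop = ⊤ := by
  refine Tendsto.limsup_eq ?_
  simpa only [Function.comp_def, ofReal_norm, enorm_eq_nnnorm] using
    ENNReal.tendsto_ofReal_atTop.comp h

theorem ftil_succ_eq_iota_pow (d : ℕ → ℕ) (p : ℕ → ℝ) (z : ℂ) (j : ℕ) :
    ftil d p (j + 1) z = iota d p z (j + 1) ^ d (j + 1) := rfl

theorem norm_iota_le_one_iff (d : ℕ → ℕ) (p : ℕ → ℝ) (z : ℂ) {j : ℕ} (hp : 0 < p (j + 1)) :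
    ‖iota d p z (j + 1)‖ ≤ 1 ↔ ‖ftil d p j z - (1 - (p (j + 1) : ℂ))‖ ≤ p (j + 1) := by
  rw [iota, norm_div, Complex.norm_real, Real.norm_of_nonneg hp.le, div_le_one hp,
    Nat.add_sub_cancel]

theorem sq_norm_iota_le_norm_iota_succ {d : ℕ → ℕ} {p : ℕ → ℝ} {z : ℂ} {j : ℕ}
    (hd : 2 ≤ d (j + 1)) (hp : p (j + 2) ∈ Set.Ioc (0 : ℝ) 1)
    (h : 1 ≤ ‖iota d p z (j + 1)‖) :
    ‖iota d p z (j + 1)‖ ^ 2 ≤ ‖iota d p z (j + 2)‖ :=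
  sq_norm_le_norm_pow_sub_div h hd hp

theorem tendsto_norm_iota {d : ℕ → ℕ} {p : ℕ → ℝ} (hd : ∀ j, 1 ≤ j → 2 ≤ d j)
    (hp : ∀ j, 1 ≤ j → p j ∈ Set.Ioc (0 : ℝ) 1) {z : ℂ} {J : ℕ}
    (h : 1 < ‖iota d p z (J + 1)‖) :
    Tendsto (fun k ↦ ‖iota d p z (J + k + 1)‖) atTop atTop := by
  have hgrowth : ∀ k, ‖iota d p z (J + 1)‖ ^ 2 ^ k ≤ ‖iota d p z (J + k + 1)‖ := by
    intro k
    induction k with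
    | zero => simp
    | succ k ih =>
      have hk : 1 ≤ ‖iota d p z (J + k + 1)‖ := (one_le_pow₀ h.le).trans ih
      calc ‖iota d p z (J + 1)‖ ^ 2 ^ (k + 1) = (‖iota d p z (J + 1)‖ ^ 2 ^ k) ^ 2 := by ring
        _ ≤ ‖iota d p z (J + k + 1)‖ ^ 2 := by gcongr
        _ ≤ ‖iota d p z (J + (k + 1) + 1)‖ := sq_norm_iota_le_norm_iota_succ (hd _ le_add_self) (hp _ le_add_self) hk
  exact tendsto_atTop_mono hgrowth <|
    (tendsto_pow_atTop_atTop_of_one_lt h).comp (tendsto_pow_atTop_atTop_of_one_lt one_lt_two)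

theorem norm_iota_le_one_of_mem_E {d : ℕ → ℕ} {p : ℕ → ℝ} (hd : ∀ j, 1 ≤ j → 2 ≤ d j)
    (hp : ∀ j, 1 ≤ j → p j ∈ Set.Ioc (0 : ℝ) 1) {z : ℂ} (hz : z ∈ E d p) (j : ℕ) :
    ‖iota d p z (j + 1)‖ ≤ 1 := by
  by_contra! hj
  have hiota := tendsto_norm_iota hd hp hj
  have hftil : Tendsto (fun k ↦ ‖ftil d p (k + (j + 1)) z‖) atTop atTop := by
    refine tendsto_atTop_mono' _ ((hiota.eventually_ge_atTop 1).mono fun k hk ↦ ?_) hiota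
    dsimp only
    rw [show k + (j + 1) = j + k + 1 by ring, ftil_succ_eq_iota_pow, norm_pow]
    exact le_self_pow₀ hk (by linarith [hd (j + k + 1) le_add_self])
  exact (limsup_enorm_eq_top_of_tendsto ((tendsto_add_atTop_iff_nat _).1 hftil)).not_lt hz

theorem stmt1_general (d : ℕ → ℕ) (p : ℕ → ℝ)
    (hd : ∀ j, 1 ≤ j → 2 ≤ d j)
    (hp : ∀ j, 1 ≤ j → p j ∈ Set.Ioc (0 : ℝ) 1) :
    ∀ z ∈ E d p, ‖z - (1 - (p 1 : ℂ))‖ ≤ p 1 ∧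
      ∀ j, 1 ≤ j → ‖ftil d p j z - (1 - (p (j + 1) : ℂ))‖ ≤ p (j + 1) := by
  intro z hz
  have hdisk : ∀ j, ‖ftil d p j z - (1 - (p (j + 1) : ℂ))‖ ≤ p (j + 1) := fun j ↦
    (norm_iota_le_one_iff d p z (hp (j + 1) le_add_self).1).1
      (norm_iota_le_one_of_mem_E hd hp hz j)
  exact ⟨hdisk 0, fun j _ ↦ hdisk j⟩

/-- `E ⊆ closed disk D(1 - p_1, p_1)`, and for `z ∈ E` and `j ≥ 1`,
`ftil j z ∈ D(1 - p_{j+1}, p_{j+1})`. -/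
theorem stmt1 (d : ℕ → ℕ) (p : ℕ → ℝ)
    (hd0 : d 0 = 1) (hd : ∀ j, 1 ≤ j → 2 ≤ d j)
    (hp : ∀ j, 1 ≤ j → p j ∈ Set.Ioc (0 : ℝ) 1) :
    ∀ z ∈ E d p, ‖z - (1 - (p 1 : ℂ))‖ ≤ p 1 ∧
      ∀ j, 1 ≤ j → ‖ftil d p j z - (1 - (p (j + 1) : ℂ))‖ ≤ p (j + 1) :=
  stmt1_general d p hd hp

end AMFC
end
end

section
/- The set E equals the intersection of the closed unit disk with all the preimages f̃_j^{-1}(closed unit disk), j ≥ 1; it also equals the intersection of the closed disk of center 1 − p_1 and radius p_1 with all the sets f̃_j^{-1}(closed disk of center 1 − p_{j+1} and radius p_{j+1}), j ≥ 1. -/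
/-! Outside the closed unit disk every `f j` at least squares the modulus, because
`‖z - (1 - p)‖ ≥ ‖z‖ - (1 - p) ≥ p ‖z‖` there; so an orbit that leaves the disk once escapes to
infinity, and `E` is the set of points whose whole orbit stays in the closed unit disk.
Moreover `‖f j w‖ ≤ 1` exactly when `w` lies in the disk `D_j` of center `1 - p j` and radius
`p j`, which is contained in the unit disk; this turns the first description into the second. -/

open Filter Finset
open scoped ENNReal Topology ZeroAtInfty

noncomputable section

namespace AMFC

lemma tendsto_atTop_of_sq_le_succ {u : ℕ → ℝ} (hu : ∀ n, 1 < u n → u n ^ 2 ≤ u (n + 1))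
    {m : ℕ} (hm : 1 < u m) : Tendsto u atTop atTop := by
  have hstep : ∀ k, u m ≤ u (k + m) → u m * u (k + m) ≤ u (k + 1 + m) := fun k hk => by
    calc u m * u (k + m) ≤ u (k + m) ^ 2 := by nlinarith
      _ ≤ u (k + 1 + m) := by rw [Nat.add_right_comm]; exact hu _ (hm.trans_le hk)
  have hge : ∀ k, u m ≤ u (k + m) := by
    intro k
    induction k with
    | zero => simp
    | succ k ih => nlinarith [hstep k ih]
  refine (tendsto_add_atTop_iff_nat m).1 (tendsto_atTop_of_geom_le ?_ hm fun k => hstep k (hge k))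
  simpa using zero_lt_one.trans hm

lemma norm_one_sub_ofReal {r : ℝ} (hr : r ≤ 1) : ‖1 - (r : ℂ)‖ = 1 - r := by
  rw [← Complex.ofReal_one, ← Complex.ofReal_sub, Complex.norm_real,
    Real.norm_of_nonneg (sub_nonneg.2 hr)]

lemma closedBall_one_sub_subset_closedBall_zero {r : ℝ} (hr : r ≤ 1) :
    Metric.closedBall (1 - (r : ℂ)) r ⊆ Metric.closedBall 0 1 :=
  Metric.closedBall_subset_closedBall' <| by
    rw [dist_zero_right, norm_one_sub_ofReal hr, add_sub_cancel]

section Iteration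

variable {d : ℕ → ℕ} {p : ℕ → ℝ}

lemma norm_f {j : ℕ} (hpj : 0 < p j) (w : ℂ) :
    ‖f d p j w‖ = (‖w - (1 - (p j : ℂ))‖ / p j) ^ d j := by
  rw [f, norm_pow, norm_div, Complex.norm_real, Real.norm_of_nonneg hpj.le]

lemma norm_f_le_one_iff {j : ℕ} (hdj : d j ≠ 0) (hpj : 0 < p j) (w : ℂ) :
    ‖f d p j w‖ ≤ 1 ↔ w ∈ Metric.closedBall (1 - (p j : ℂ)) (p j) := by
  rw [norm_f hpj, pow_le_one_iff_of_nonneg (by positivity) hdj, div_le_one hpj,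
    Metric.mem_closedBall, dist_eq_norm]

lemma sq_norm_le_norm_f {j : ℕ} (hdj : 2 ≤ d j) (hpj : p j ∈ Set.Ioc (0 : ℝ) 1) {w : ℂ}
    (hw : 1 < ‖w‖) : ‖w‖ ^ 2 ≤ ‖f d p j w‖ := by
  obtain ⟨hp0, hp1⟩ := hpj
  have hshift : ‖w‖ ≤ ‖w - (1 - (p j : ℂ))‖ / p j := by
    rw [le_div_iff₀ hp0]
    have := norm_sub_norm_le w (1 - (p j : ℂ))
    rw [norm_one_sub_ofReal hp1] at this
    nlinarith
  calc ‖w‖ ^ 2 ≤ (‖w - (1 - (p j : ℂ))‖ / p j) ^ 2 := by gcongr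
    _ ≤ (‖w - (1 - (p j : ℂ))‖ / p j) ^ d j :=
      pow_le_pow_right₀ (hw.le.trans hshift) hdj
    _ = ‖f d p j w‖ := (norm_f hp0 w).symm

variable (hd : ∀ j, 1 ≤ j → 2 ≤ d j) (hp : ∀ j, 1 ≤ j → p j ∈ Set.Ioc (0 : ℝ) 1)
include hd hp

lemma ftil_succ_preimage_closedBall (n : ℕ) :
    ftil d p (n + 1) ⁻¹' Metric.closedBall 0 1 =
      ftil d p n ⁻¹' Metric.closedBall (1 - (p (n + 1) : ℂ)) (p (n + 1)) := by
  ext z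
  simp only [Set.mem_preimage, mem_closedBall_zero_iff]
  exact norm_f_le_one_iff (by linarith [hd (n + 1) (by omega)]) (hp (n + 1) (by omega)).1 _

lemma tendsto_norm_ftil_atTop {z : ℂ} {m : ℕ} (hm : 1 < ‖ftil d p m z‖) :
    Tendsto (fun n => ‖ftil d p n z‖) atTop atTop :=
  tendsto_atTop_of_sq_le_succ
    (fun n hn => sq_norm_le_norm_f (hd (n + 1) (by omega)) (hp (n + 1) (by omega)) hn) hm

lemma E_eq_iInter_preimage_closedBall :
    E d p = ⋂ n, ftil d p n ⁻¹' Metric.closedBall 0 1 := by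
  ext z
  simp only [E, Set.mem_ofPred_eq, Set.mem_iInter, Set.mem_preimage, mem_closedBall_zero_iff]
  constructor
  · intro hz
    by_contra! ⟨m, hm⟩
    have htop : Tendsto (fun n => (‖ftil d p n z‖₊ : ℝ≥0∞)) atTop (𝓝 ⊤) :=
      (ENNReal.tendsto_ofReal_atTop.comp (tendsto_norm_ftil_atTop hd hp hm)).congr
        fun n => ofReal_norm _
    exact hz.ne htop.limsup_eq
  · intro hz
    refine (limsup_le_of_le (by isBoundedDefault) (Eventually.of_forall fun n => ?_)).trans_lt
      ENNReal.one_lt_top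
    exact_mod_cast hz n

lemma iInter_ftil_succ_preimage_closedBall :
    ⋂ n, ftil d p (n + 1) ⁻¹' Metric.closedBall 0 1 =
      ⋂ n, ftil d p n ⁻¹' Metric.closedBall 0 1 := by
  symm
  rw [← Set.inter_iInter_nat_succ, Set.inter_eq_right]
  refine (Set.iInter_subset _ 0).trans ?_
  rw [ftil_succ_preimage_closedBall hd hp 0]
  exact Set.preimage_mono (closedBall_one_sub_subset_closedBall_zero (hp 1 le_rfl).2)

end Iteration

theorem stmt2_general (d : ℕ → ℕ) (p : ℕ → ℝ)
    (hd : ∀ j, 1 ≤ j → 2 ≤ d j)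
    (hp : ∀ j, 1 ≤ j → p j ∈ Set.Ioc (0 : ℝ) 1) :
    E d p = Metric.closedBall (0 : ℂ) 1 ∩
        ⋂ j : ℕ, ftil d p (j + 1) ⁻¹' Metric.closedBall (0 : ℂ) 1 ∧
      E d p = Metric.closedBall (1 - (p 1 : ℂ)) (p 1) ∩
        ⋂ j : ℕ, ftil d p (j + 1) ⁻¹'
          Metric.closedBall (1 - (p (j + 2) : ℂ)) (p (j + 2)) := by
  rw [E_eq_iInter_preimage_closedBall hd hp]
  constructor
  · exact (Set.inter_iInter_nat_succ _).symm
  · simp_rw [← iInter_ftil_succ_preimage_closedBall hd hp, ftil_succ_preimage_closedBall hd hp]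
    exact (Set.inter_iInter_nat_succ _).symm

/-- two descriptions of `E` as intersections of preimages of closed disks. -/
theorem stmt2 (d : ℕ → ℕ) (p : ℕ → ℝ)
    (hd0 : d 0 = 1) (hd : ∀ j, 1 ≤ j → 2 ≤ d j)
    (hp : ∀ j, 1 ≤ j → p j ∈ Set.Ioc (0 : ℝ) 1) :
    E d p = Metric.closedBall (0 : ℂ) 1 ∩
        ⋂ j : ℕ, ftil d p (j + 1) ⁻¹' Metric.closedBall (0 : ℂ) 1 ∧
      E d p = Metric.closedBall (1 - (p 1 : ℂ)) (p 1) ∩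
        ⋂ j : ℕ, ftil d p (j + 1) ⁻¹'
          Metric.closedBall (1 - (p (j + 2) : ℂ)) (p (j + 2)) :=
  stmt2_general d p hd hp

end AMFC
end
end
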